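/- arXiv:1902.05451 — 3 statements merged into one kernel-verified Lean document; each statement's English description precedes it below -/
import Mathlib

section
/- Under the assumptions that Ω ⊆ ℝ^d is bounded, ϱ is a Borel probability measure, and f, g are continuous on the closure of Ω with f, g ∈ L^∞(Ω,ϱ), for all p, q ≥ 1 one has W_p(f_*ϱ, g_*ϱ) ≤ C(p,q) · ‖f−g‖_∞^{p/(q+p)} · ‖f−g‖_q^{q/(q+p)} for a constant C(p,q) depending only on p and q. -/
/-!
Pushing `ϱ` forward by `x ↦ (f x, g x)` couples `f_*ϱ` and `g_*ϱ`, so `W_p ≤ ‖f - g‖_p`.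
On a probability space `‖h‖_p` is bounded by `‖h‖_∞^{p/(q+p)} ‖h‖_q^{q/(q+p)}`: for `p ≤ q` this
follows from `‖h‖_p ≤ ‖h‖_q ≤ ‖h‖_∞`, and for `q < p` from `|h|^p ≤ ‖h‖_∞^{p-q} |h|^q`, which gives
`‖h‖_p ≤ ‖h‖_∞^{1-q/p} ‖h‖_q^{q/p}`, after which `‖h‖_q ≤ ‖h‖_∞` trades weight towards `‖h‖_∞`.
Hence `C(p,q) = 1` works.
-/

open MeasureTheory ENNReal

/-- The `p`-Wasserstein distance between two measures on `ℝ`. -/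
noncomputable def Wp (p : ℝ) (μ ν : Measure ℝ) : ℝ≥0∞ :=
  ⨅ γ ∈ {γ : Measure (ℝ × ℝ) | γ.map Prod.fst = μ ∧ γ.map Prod.snd = ν},
    (∫⁻ z, ENNReal.ofReal (|z.1 - z.2| ^ p) ∂γ) ^ (1 / p)

namespace ENNReal

theorem rpow_one_sub_mul_rpow_le {a b : ℝ≥0∞} {s t : ℝ} (hba : b ≤ a) (hs : 0 ≤ s)
    (hst : s ≤ t) (ht : t ≤ 1) : a ^ (1 - t) * b ^ t ≤ a ^ (1 - s) * b ^ s := by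
  have hts : 0 ≤ t - s := sub_nonneg.mpr hst
  calc a ^ (1 - t) * b ^ t = a ^ (1 - t) * (b ^ (t - s) * b ^ s) := by
        rw [← rpow_add_of_nonneg _ _ hts hs, sub_add_cancel]
    _ ≤ a ^ (1 - t) * (a ^ (t - s) * b ^ s) := by gcongr
    _ = a ^ (1 - s) * b ^ s := by
        rw [← mul_assoc, ← rpow_add_of_nonneg _ _ (sub_nonneg.mpr ht) hts]
        ring_nf

end ENNReal

namespace MeasureTheory

variable {α E : Type*} [MeasurableSpace α] {μ : Measure α} [NormedAddCommGroup E] {f : α → E}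

theorem eLpNorm_ofReal_eq_lintegral {p : ℝ} (hp : 0 < p) :
    eLpNorm f (ENNReal.ofReal p) μ = (∫⁻ x, ‖f x‖ₑ ^ p ∂μ) ^ (1 / p) := by
  rw [eLpNorm_eq_lintegral_rpow_enorm_toReal (ofReal_pos.mpr hp).ne' ofReal_ne_top,
    toReal_ofReal hp.le]

theorem eLpNorm_ofReal_le_eLpNorm_top_rpow_mul_eLpNorm_rpow_of_lt {p q : ℝ} (hq : 0 < q)
    (hqp : q < p) (hf : AEStronglyMeasurable f μ) :
    eLpNorm f (ENNReal.ofReal p) μ ≤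
      eLpNorm f ⊤ μ ^ (1 - q / p) * eLpNorm f (ENNReal.ofReal q) μ ^ (q / p) := by
  have hp : 0 < p := hq.trans hqp
  set A := eLpNorm f ⊤ μ
  have hpointwise : ∀ᵐ x ∂μ, ‖f x‖ₑ ^ p ≤ A ^ (p - q) * ‖f x‖ₑ ^ q := by
    filter_upwards [enorm_ae_le_eLpNormEssSup f μ] with x hx
    calc ‖f x‖ₑ ^ p = ‖f x‖ₑ ^ (p - q) * ‖f x‖ₑ ^ q := by
          rw [← rpow_add_of_nonneg _ _ (sub_nonneg.mpr hqp.le) hq.le, sub_add_cancel]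
      _ ≤ A ^ (p - q) * ‖f x‖ₑ ^ q := by
          rw [← eLpNorm_exponent_top] at hx
          gcongr
  have hintegral : ∫⁻ x, ‖f x‖ₑ ^ p ∂μ ≤ A ^ (p - q) * ∫⁻ x, ‖f x‖ₑ ^ q ∂μ := by
    rw [← lintegral_const_mul'' _ (hf.enorm.pow_const q)]
    exact lintegral_mono_ae hpointwise
  calc eLpNorm f (ENNReal.ofReal p) μ
      ≤ (A ^ (p - q) * ∫⁻ x, ‖f x‖ₑ ^ q ∂μ) ^ (1 / p) := by
        rw [eLpNorm_ofReal_eq_lintegral hp]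
        gcongr
    _ = A ^ (1 - q / p) * eLpNorm f (ENNReal.ofReal q) μ ^ (q / p) := by
        rw [mul_rpow_of_nonneg _ _ (by positivity), eLpNorm_ofReal_eq_lintegral hq,
          ← rpow_mul, ← rpow_mul]
        congr 2 <;> field_simp

theorem eLpNorm_ofReal_le_eLpNorm_top_rpow_mul_eLpNorm_rpow [IsProbabilityMeasure μ] {p q : ℝ}
    (hp : 0 < p) (hq : 0 < q) (hf : AEStronglyMeasurable f μ) :
    eLpNorm f (ENNReal.ofReal p) μ ≤
      eLpNorm f ⊤ μ ^ (p / (q + p)) * eLpNorm f (ENNReal.ofReal q) μ ^ (q / (q + p)) := by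
  set A := eLpNorm f ⊤ μ
  set B := eLpNorm f (ENNReal.ofReal q) μ
  have hBA : B ≤ A := eLpNorm_le_eLpNorm_of_exponent_le le_top hf
  have hweight : p / (q + p) = 1 - q / (q + p) := by field_simp; ring
  have hθ : 0 ≤ q / (q + p) := by positivity
  rw [hweight]
  rcases le_or_gt p q with hpq | hqp
  · calc eLpNorm f (ENNReal.ofReal p) μ ≤ B :=
          eLpNorm_le_eLpNorm_of_exponent_le (ofReal_le_ofReal hpq) hf
      _ = A ^ (1 - 1 : ℝ) * B ^ (1 : ℝ) := by simp
      _ ≤ A ^ (1 - q / (q + p)) * B ^ (q / (q + p)) :=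
          rpow_one_sub_mul_rpow_le hBA hθ ((div_le_one (by positivity)).mpr (by linarith)) le_rfl
  · calc eLpNorm f (ENNReal.ofReal p) μ ≤ A ^ (1 - q / p) * B ^ (q / p) :=
          eLpNorm_ofReal_le_eLpNorm_top_rpow_mul_eLpNorm_rpow_of_lt hq hqp hf
      _ ≤ A ^ (1 - q / (q + p)) * B ^ (q / (q + p)) :=
          rpow_one_sub_mul_rpow_le hBA hθ (by gcongr; linarith)
            ((div_le_one hp).mpr hqp.le)

end MeasureTheory

theorem Wp_map_le_eLpNorm_sub {α : Type*} [MeasurableSpace α] {ϱ : Measure α} {f g : α → ℝ}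
    (hf : Measurable f) (hg : Measurable g) {p : ℝ} (hp : 0 < p) :
    Wp p (ϱ.map f) (ϱ.map g) ≤ eLpNorm (f - g) (ENNReal.ofReal p) ϱ := by
  have hfg : Measurable fun x ↦ (f x, g x) := hf.prodMk hg
  have hcoupling : (ϱ.map fun x ↦ (f x, g x)).map Prod.fst = ϱ.map f ∧
      (ϱ.map fun x ↦ (f x, g x)).map Prod.snd = ϱ.map g :=
    ⟨by rw [Measure.map_map measurable_fst hfg]; rfl,
      by rw [Measure.map_map measurable_snd hfg]; rfl⟩
  have hcost : ∫⁻ z, ENNReal.ofReal (|z.1 - z.2| ^ p) ∂(ϱ.map fun x ↦ (f x, g x)) =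
      ∫⁻ x, ‖(f - g) x‖ₑ ^ p ∂ϱ := by
    rw [lintegral_map (by fun_prop) hfg]
    refine lintegral_congr fun x ↦ ?_
    rw [Pi.sub_apply, Real.enorm_eq_ofReal_abs, ofReal_rpow_of_nonneg (abs_nonneg _) hp.le]
  calc Wp p (ϱ.map f) (ϱ.map g)
      ≤ (∫⁻ z, ENNReal.ofReal (|z.1 - z.2| ^ p) ∂(ϱ.map fun x ↦ (f x, g x))) ^ (1 / p) :=
        iInf₂_le (ϱ.map fun x ↦ (f x, g x)) hcoupling
    _ = eLpNorm (f - g) (ENNReal.ofReal p) ϱ := by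
        rw [hcost, eLpNorm_ofReal_eq_lintegral hp]

/-- Interpolation bound: `W_p(f_*ϱ, g_*ϱ) ≤ C(p,q) ‖f-g‖_∞^{p/(q+p)} ‖f-g‖_q^{q/(q+p)}`,
with a constant depending only on `p` and `q`. -/
theorem wasserstein_interpolation (p q : ℝ) (hp : 1 ≤ p) (hq : 1 ≤ q) :
    ∃ C : ℝ, 0 < C ∧
      ∀ (d : ℕ) (Ω : Set (EuclideanSpace ℝ (Fin d))), MeasurableSet Ω →
        Bornology.IsBounded Ω →
        ∀ (ϱ : Measure (EuclideanSpace ℝ (Fin d))), IsProbabilityMeasure ϱ →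
          ϱ Ωᶜ = 0 →
          ∀ (f g : EuclideanSpace ℝ (Fin d) → ℝ), Measurable f → Measurable g →
            ContinuousOn f (closure Ω) → ContinuousOn g (closure Ω) →
            eLpNorm f ⊤ ϱ < ⊤ → eLpNorm g ⊤ ϱ < ⊤ →
            Wp p (ϱ.map f) (ϱ.map g) ≤
              ENNReal.ofReal C * (eLpNorm (f - g) ⊤ ϱ) ^ (p / (q + p)) *
                (eLpNorm (f - g) (ENNReal.ofReal q) ϱ) ^ (q / (q + p)) := by
  refine ⟨1, one_pos, fun d Ω _ _ ϱ _ _ f g hf hg _ _ _ _ ↦ ?_⟩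
  rw [ofReal_one, one_mul]
  exact (Wp_map_le_eLpNorm_sub hf hg (by linarith)).trans
    (eLpNorm_ofReal_le_eLpNorm_top_rpow_mul_eLpNorm_rpow (by linarith) (by linarith)
      (hf.sub hg).aestronglyMeasurable)
end

section
/- If f, g are continuous on the closure of a bounded set Ω ⊆ ℝ^d, ϱ is a Borel probability measure on Ω, and f ≥ g holds ϱ-almost everywhere, then W_1(f_*ϱ, g_*ϱ) = ‖f − g‖_{L^1(Ω,ϱ)}. -/
open MeasureTheory ENNReal

/-! The coupling `(f, g)_* ϱ` costs `∫ |f - g| dϱ`. Conversely, testing any coupling of `f_* ϱ`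
and `g_* ϱ` against the `1`-Lipschitz function `id` shows that it costs at least
`∫ f dϱ - ∫ g dϱ`, which is `∫ |f - g| dϱ` because `g ≤ f`. Integrability of `f` and `g` comes
from their continuity on the compact set `closure Ω`. -/

theorem Wp_one_eq_iInf (μ ν : Measure ℝ) :
    Wp 1 μ ν = ⨅ γ ∈ {γ : Measure (ℝ × ℝ) | γ.map Prod.fst = μ ∧ γ.map Prod.snd = ν},
      ∫⁻ z, ENNReal.ofReal |z.1 - z.2| ∂γ := by
  simp only [Wp, Real.rpow_one, div_one, ENNReal.rpow_one]

theorem integral_sub_le_integral_abs_of_map_eq {γ : Measure (ℝ × ℝ)} {μ ν : Measure ℝ}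
    (h₁ : γ.map Prod.fst = μ) (h₂ : γ.map Prod.snd = ν)
    (hμ : Integrable id μ) (hν : Integrable id ν) :
    ∫ x, x ∂μ - ∫ y, y ∂ν ≤ ∫ z, |z.1 - z.2| ∂γ := by
  subst h₁ h₂
  have hfst : Integrable Prod.fst γ :=
    (integrable_map_measure aestronglyMeasurable_id measurable_fst.aemeasurable).1 hμ
  have hsnd : Integrable Prod.snd γ :=
    (integrable_map_measure aestronglyMeasurable_id measurable_snd.aemeasurable).1 hν
  have hmean_fst : ∫ x, x ∂(γ.map Prod.fst) = ∫ z, z.1 ∂γ :=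
    integral_map measurable_fst.aemeasurable aestronglyMeasurable_id
  have hmean_snd : ∫ y, y ∂(γ.map Prod.snd) = ∫ z, z.2 ∂γ :=
    integral_map measurable_snd.aemeasurable aestronglyMeasurable_id
  rw [hmean_fst, hmean_snd, ← integral_sub hfst hsnd]
  exact integral_mono (hfst.sub hsnd) (hfst.sub hsnd).abs fun z => le_abs_self _

theorem ofReal_integral_sub_le_Wp_one {μ ν : Measure ℝ} (hμ : Integrable id μ)
    (hν : Integrable id ν) : ENNReal.ofReal (∫ x, x ∂μ - ∫ y, y ∂ν) ≤ Wp 1 μ ν := by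
  rw [Wp_one_eq_iInf]
  refine le_iInf₂ fun γ ⟨h₁, h₂⟩ => ?_
  calc ENNReal.ofReal (∫ x, x ∂μ - ∫ y, y ∂ν)
      ≤ ENNReal.ofReal (∫ z, |z.1 - z.2| ∂γ) :=
        ENNReal.ofReal_le_ofReal (integral_sub_le_integral_abs_of_map_eq h₁ h₂ hμ hν)
    _ ≤ ‖∫ z, |z.1 - z.2| ∂γ‖ₑ := Real.ofReal_le_enorm _
    _ ≤ ∫⁻ z, ‖|z.1 - z.2|‖ₑ ∂γ := enorm_integral_le_lintegral_enorm _
    _ = ∫⁻ z, ENNReal.ofReal |z.1 - z.2| ∂γ := by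
        simp only [Real.enorm_eq_ofReal_abs, abs_abs]

section PushForward

variable {α : Type*} [MeasurableSpace α] {μ : Measure α} {f g : α → ℝ}

theorem Wp_one_map_le_eLpNorm_sub (hf : AEMeasurable f μ) (hg : AEMeasurable g μ) :
    Wp 1 (μ.map f) (μ.map g) ≤ eLpNorm (f - g) 1 μ := by
  have hfg : AEMeasurable (fun x => (f x, g x)) μ := hf.prodMk hg
  rw [Wp_one_eq_iInf]
  refine iInf₂_le_of_le (μ.map fun x => (f x, g x)) ⟨?_, ?_⟩ (le_of_eq ?_)
  · exact AEMeasurable.map_map_of_aemeasurable measurable_fst.aemeasurable hfg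
  · exact AEMeasurable.map_map_of_aemeasurable measurable_snd.aemeasurable hfg
  · rw [lintegral_map' (by fun_prop) hfg, eLpNorm_one_eq_lintegral_enorm]
    simp only [Pi.sub_apply, Real.enorm_eq_ofReal_abs]

theorem ofReal_integral_sub_le_Wp_one_map (hf : Integrable f μ) (hg : Integrable g μ) :
    ENNReal.ofReal (∫ x, f x ∂μ - ∫ x, g x ∂μ) ≤ Wp 1 (μ.map f) (μ.map g) := by
  have hf' : Integrable id (μ.map f) :=
    (integrable_map_measure aestronglyMeasurable_id hf.aemeasurable).2 hf
  have hg' : Integrable id (μ.map g) :=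
    (integrable_map_measure aestronglyMeasurable_id hg.aemeasurable).2 hg
  have hmean_f : ∫ y, y ∂(μ.map f) = ∫ x, f x ∂μ :=
    integral_map hf.aemeasurable aestronglyMeasurable_id
  have hmean_g : ∫ y, y ∂(μ.map g) = ∫ x, g x ∂μ :=
    integral_map hg.aemeasurable aestronglyMeasurable_id
  rw [← hmean_f, ← hmean_g]
  exact ofReal_integral_sub_le_Wp_one hf' hg'

theorem eLpNorm_one_sub_eq_ofReal_integral_sub (hf : Integrable f μ) (hg : Integrable g μ)
    (hle : g ≤ᵐ[μ] f) :
    eLpNorm (f - g) 1 μ = ENNReal.ofReal (∫ x, f x ∂μ - ∫ x, g x ∂μ) := by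
  have hnonneg : 0 ≤ᵐ[μ] f - g := hle.mono fun x hx => sub_nonneg.2 hx
  rw [← integral_sub hf hg, ← Pi.sub_def,
    ofReal_integral_eq_lintegral_ofReal (hf.sub hg) hnonneg, eLpNorm_one_eq_lintegral_enorm]
  exact lintegral_congr_ae (hnonneg.mono fun x hx => Real.enorm_eq_ofReal hx)

theorem Wp_one_map_eq_eLpNorm_sub_of_ae_le (hf : Integrable f μ) (hg : Integrable g μ)
    (hle : g ≤ᵐ[μ] f) : Wp 1 (μ.map f) (μ.map g) = eLpNorm (f - g) 1 μ :=
  le_antisymm (Wp_one_map_le_eLpNorm_sub hf.aemeasurable hg.aemeasurable)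
    ((eLpNorm_one_sub_eq_ofReal_integral_sub hf hg hle).trans_le
      (ofReal_integral_sub_le_Wp_one_map hf hg))

end PushForward

theorem ContinuousOn.integrable_of_isBounded {X E : Type*} [MetricSpace X] [ProperSpace X]
    [MeasurableSpace X] [OpensMeasurableSpace X] [NormedAddCommGroup E] {μ : Measure X}
    [IsFiniteMeasure μ] {s : Set X} {f : X → E} (hf : ContinuousOn f (closure s))
    (hs : Bornology.IsBounded s) (hμ : μ sᶜ = 0) : Integrable f μ := by
  have hmem : ∀ᵐ x ∂μ, x ∈ closure s := (ae_iff.2 hμ).mono fun _ => (subset_closure ·)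
  rw [← Measure.restrict_eq_self_of_ae_mem hmem]
  exact hf.integrableOn_compact hs.isCompact_closure

theorem wasserstein_eq_l1_of_ae_le_general {d : ℕ} (Ω : Set (EuclideanSpace ℝ (Fin d)))
    (hbdd : Bornology.IsBounded Ω)
    (ϱ : Measure (EuclideanSpace ℝ (Fin d)))
    [IsProbabilityMeasure ϱ] (hsupp : ϱ Ωᶜ = 0)
    (f g : EuclideanSpace ℝ (Fin d) → ℝ)
    (hf : ContinuousOn f (closure Ω)) (hg : ContinuousOn g (closure Ω))
    (hge : ∀ᵐ α ∂ϱ, g α ≤ f α) :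
    Wp 1 (ϱ.map f) (ϱ.map g) = eLpNorm (f - g) 1 ϱ :=
  Wp_one_map_eq_eLpNorm_sub_of_ae_le (hf.integrable_of_isBounded hbdd hsupp)
    (hg.integrable_of_isBounded hbdd hsupp) hge

/-- If `f ≥ g` holds `ϱ`-a.e., then `W₁(f_*ϱ, g_*ϱ) = ‖f − g‖_{L¹(Ω,ϱ)}`. -/
theorem wasserstein_eq_l1_of_ae_le {d : ℕ} (Ω : Set (EuclideanSpace ℝ (Fin d)))
    (hΩ : MeasurableSet Ω) (hbdd : Bornology.IsBounded Ω)
    (ϱ : Measure (EuclideanSpace ℝ (Fin d)))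
    [IsProbabilityMeasure ϱ] (hsupp : ϱ Ωᶜ = 0)
    (f g : EuclideanSpace ℝ (Fin d) → ℝ)
    (hfm : Measurable f) (hgm : Measurable g)
    (hf : ContinuousOn f (closure Ω)) (hg : ContinuousOn g (closure Ω))
    (hge : ∀ᵐ α ∂ϱ, g α ≤ f α) :
    Wp 1 (ϱ.map f) (ϱ.map g) = eLpNorm (f - g) 1 ϱ :=
  wasserstein_eq_l1_of_ae_le_general Ω hbdd ϱ hsupp f g hf hg hge
end

section
/- Let I be a closed bounded interval with probability measure dϱ = r(α)dα where r is bounded and continuous, and let f, g ∈ C¹(I) be strictly monotonically decreasing with |f'|, |g'| ≥ τ > 0. Then for every k ∈ ℕ, W_2(f_*ϱ, g_*ϱ) ≥ A_k |E_ϱ[f^k] − E_ϱ[g^k]|, where A_k = (√(2k−1)/k)(M^{2k−1} − m^{2k−1})^{−1/2} τ^{1/2} ‖r‖_∞^{−1/2}, M = max over I of max(f,g) and m = min over I of min(f,g). -/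
/-!
Fix a coupling `γ` of `f_*ϱ` and `g_*ϱ`. Writing `x^k - y^k = (x - y) ∑ xⁱ y^(k-1-i)` and pairing
the terms `i` and `k - 1 - i` gives `|x^k - y^k| ≤ |x - y| · (k/2)(|x|^(k-1) + |y|^(k-1))`, so by
Cauchy–Schwarz in `L²(γ)` the moment difference is at most the `W₂`-cost of `γ` times
`k · (E f^(2k-2) / 2 + E g^(2k-2) / 2)^(1/2)`. The even moments are bounded by substituting
`u = f α`: since `r ≤ ‖r‖_∞ ≤ ‖r‖_∞ |f'| / τ`, we get
`E f^(2k-2) ≤ ‖r‖_∞ / τ · ∫_m^M u^(2k-2) du = ‖r‖_∞ (M^(2k-1) - m^(2k-1)) / (τ (2k-1))`.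
-/

open MeasureTheory ENNReal

open Set

theorem pow_mul_pow_add_pow_mul_pow_le {α : Type*} [CommRing α] [LinearOrder α]
    [IsStrictOrderedRing α] {x y : α} (hx : 0 ≤ x) (hy : 0 ≤ y) (i j : ℕ) :
    x ^ i * y ^ j + x ^ j * y ^ i ≤ x ^ (i + j) + y ^ (i + j) := by
  have key : 0 ≤ (x ^ i - y ^ i) * (x ^ j - y ^ j) := by
    rcases le_total x y with h | h
    · exact mul_nonneg_of_nonpos_of_nonpos (sub_nonpos.2 (pow_le_pow_left₀ hx h i))
        (sub_nonpos.2 (pow_le_pow_left₀ hx h j))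
    · exact mul_nonneg (sub_nonneg.2 (pow_le_pow_left₀ hy h i))
        (sub_nonneg.2 (pow_le_pow_left₀ hy h j))
  calc x ^ i * y ^ j + x ^ j * y ^ i
      ≤ x ^ i * y ^ j + x ^ j * y ^ i + (x ^ i - y ^ i) * (x ^ j - y ^ j) :=
        le_add_of_nonneg_right key
    _ = x ^ (i + j) + y ^ (i + j) := by ring

open Finset in
theorem two_mul_abs_pow_succ_sub_pow_succ_le {α : Type*} [CommRing α] [LinearOrder α]
    [IsStrictOrderedRing α] (x y : α) (n : ℕ) :
    2 * |x ^ (n + 1) - y ^ (n + 1)| ≤ (n + 1) * (|x| ^ n + |y| ^ n) * |x - y| := by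
  set S := ∑ i ∈ range (n + 1), |x| ^ i * |y| ^ (n - i)
  have hreflect : ∑ i ∈ range (n + 1), |x| ^ (n - i) * |y| ^ i = S := by
    rw [← sum_range_reflect]
    refine sum_congr rfl fun i hi => ?_
    rw [show n + 1 - 1 - i = n - i by omega, Nat.sub_sub_self (Nat.le_of_lt_succ (mem_range.1 hi))]
  have hS : 2 * S ≤ (n + 1) * (|x| ^ n + |y| ^ n) :=
    calc 2 * S = ∑ i ∈ range (n + 1), (|x| ^ i * |y| ^ (n - i) + |x| ^ (n - i) * |y| ^ i) := by
          rw [sum_add_distrib, hreflect, two_mul]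
      _ ≤ ∑ _i ∈ range (n + 1), (|x| ^ n + |y| ^ n) := by
          refine sum_le_sum fun i hi => ?_
          have := pow_mul_pow_add_pow_mul_pow_le (abs_nonneg x) (abs_nonneg y) i (n - i)
          rwa [Nat.add_sub_cancel' (Nat.lt_succ_iff.1 (mem_range.1 hi))] at this
      _ = (n + 1) * (|x| ^ n + |y| ^ n) := by simp [mul_add]
  have habs : |∑ i ∈ range (n + 1), x ^ i * y ^ (n - i)| ≤ S :=
    (abs_sum_le_sum_abs _ _).trans_eq (by simp [S, abs_mul, abs_pow])
  rw [← geom_sum₂_mul, abs_mul, ← mul_assoc]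
  simp only [Nat.add_sub_cancel]
  exact mul_le_mul_of_nonneg_right (by linarith) (abs_nonneg _)

theorem lintegral_sq_mul_abs_pow_add_abs_pow_le (γ : Measure (ℝ × ℝ)) (n : ℕ) {B : ℝ}
    (h₁ : ∫⁻ z, ENNReal.ofReal (z.1 ^ (2 * n)) ∂γ ≤ ENNReal.ofReal B)
    (h₂ : ∫⁻ z, ENNReal.ofReal (z.2 ^ (2 * n)) ∂γ ≤ ENNReal.ofReal B) :
    ∫⁻ z, ENNReal.ofReal ((n + 1) / 2 * (|z.1| ^ n + |z.2| ^ n)) ^ (2 : ℝ) ∂γ ≤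
      ENNReal.ofReal ((n + 1) ^ 2 * B) := by
  have hsq (x : ℝ) : (|x| ^ n) ^ 2 = x ^ (2 * n) := by rw [← abs_pow, sq_abs, pow_mul']
  have hpt (z : ℝ × ℝ) : ENNReal.ofReal ((n + 1) / 2 * (|z.1| ^ n + |z.2| ^ n)) ^ (2 : ℝ) ≤
      ENNReal.ofReal ((n + 1) ^ 2 / 2) *
        (ENNReal.ofReal (z.1 ^ (2 * n)) + ENNReal.ofReal (z.2 ^ (2 * n))) := by
    rw [ENNReal.ofReal_rpow_of_nonneg (by positivity) zero_le_two, Real.rpow_two,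
      ← ENNReal.ofReal_add ((even_two_mul n).pow_nonneg _) ((even_two_mul n).pow_nonneg _),
      ← ENNReal.ofReal_mul (by positivity)]
    refine ENNReal.ofReal_le_ofReal ?_
    have := add_sq_le (a := |z.1| ^ n) (b := |z.2| ^ n)
    rw [hsq, hsq] at this
    rw [mul_pow]
    nlinarith
  calc _ ≤ ∫⁻ z, ENNReal.ofReal ((n + 1) ^ 2 / 2) *
        (ENNReal.ofReal (z.1 ^ (2 * n)) + ENNReal.ofReal (z.2 ^ (2 * n))) ∂γ := lintegral_mono hpt
    _ = ENNReal.ofReal ((n + 1) ^ 2 / 2) * (∫⁻ z, ENNReal.ofReal (z.1 ^ (2 * n)) ∂γ +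
        ∫⁻ z, ENNReal.ofReal (z.2 ^ (2 * n)) ∂γ) := by
      rw [lintegral_const_mul' _ _ ofReal_ne_top, lintegral_add_left (by fun_prop)]
    _ ≤ ENNReal.ofReal ((n + 1) ^ 2 / 2) * (ENNReal.ofReal B + ENNReal.ofReal B) := by
      gcongr
    _ = ENNReal.ofReal ((n + 1) ^ 2 * B) := by
      rw [← two_mul, ← mul_assoc, ← ENNReal.ofReal_ofNat 2, ← ENNReal.ofReal_mul (by positivity),
        ← ENNReal.ofReal_mul (by positivity)]
      congr 1
      ring

theorem ofReal_abs_integral_pow_succ_sub_le (γ : Measure (ℝ × ℝ)) (n : ℕ) {B : ℝ} (hB : 0 ≤ B)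
    (h₁ : ∫⁻ z, ENNReal.ofReal (z.1 ^ (2 * n)) ∂γ ≤ ENNReal.ofReal B)
    (h₂ : ∫⁻ z, ENNReal.ofReal (z.2 ^ (2 * n)) ∂γ ≤ ENNReal.ofReal B) :
    ENNReal.ofReal |∫ z, (z.1 ^ (n + 1) - z.2 ^ (n + 1)) ∂γ| ≤
      ENNReal.ofReal ((n + 1) * √B) *
        (∫⁻ z, ENNReal.ofReal (|z.1 - z.2| ^ (2 : ℝ)) ∂γ) ^ (1 / (2 : ℝ)) := by
  set Q : ℝ × ℝ → ℝ := fun z => (n + 1) / 2 * (|z.1| ^ n + |z.2| ^ n)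
  have hpt (z : ℝ × ℝ) : ENNReal.ofReal |z.1 ^ (n + 1) - z.2 ^ (n + 1)| ≤
      ENNReal.ofReal |z.1 - z.2| * ENNReal.ofReal (Q z) := by
    rw [← ENNReal.ofReal_mul (abs_nonneg _)]
    refine ENNReal.ofReal_le_ofReal ?_
    simp only [Q]
    linarith [two_mul_abs_pow_succ_sub_pow_succ_le z.1 z.2 n]
  have hQ : (∫⁻ z, ENNReal.ofReal (Q z) ^ (2 : ℝ) ∂γ) ^ (1 / (2 : ℝ)) ≤
      ENNReal.ofReal ((n + 1) * √B) := by
    calc _ ≤ ENNReal.ofReal ((n + 1) ^ 2 * B) ^ (1 / (2 : ℝ)) := by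
          gcongr; exact lintegral_sq_mul_abs_pow_add_abs_pow_le γ n h₁ h₂
      _ = ENNReal.ofReal ((n + 1) * √B) := by
          rw [ENNReal.ofReal_rpow_of_nonneg (by positivity) (by norm_num), ← Real.sqrt_eq_rpow,
            Real.sqrt_mul (by positivity), Real.sqrt_sq (by positivity)]
  calc ENNReal.ofReal |∫ z, (z.1 ^ (n + 1) - z.2 ^ (n + 1)) ∂γ|
      ≤ ∫⁻ z, ENNReal.ofReal |z.1 ^ (n + 1) - z.2 ^ (n + 1)| ∂γ := by
        simp_rw [← Real.enorm_eq_ofReal_abs]; exact enorm_integral_le_lintegral_enorm _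
    _ ≤ ∫⁻ z, ENNReal.ofReal |z.1 - z.2| * ENNReal.ofReal (Q z) ∂γ := lintegral_mono hpt
    _ ≤ (∫⁻ z, ENNReal.ofReal |z.1 - z.2| ^ (2 : ℝ) ∂γ) ^ (1 / (2 : ℝ)) *
        (∫⁻ z, ENNReal.ofReal (Q z) ^ (2 : ℝ) ∂γ) ^ (1 / (2 : ℝ)) :=
      ENNReal.lintegral_mul_le_Lp_mul_Lq γ Real.HolderConjugate.two_two (by fun_prop) (by fun_prop)
    _ ≤ _ := by
      rw [mul_comm]
      gcongr
      simp only [ENNReal.ofReal_rpow_of_nonneg (abs_nonneg _) zero_le_two, le_refl]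

theorem ofReal_abs_integral_pow_succ_sub_div_le_Wp_two {μ ν : Measure ℝ} (n : ℕ) {B : ℝ}
    (hB : 0 ≤ B) (hμ : Integrable (fun x => x ^ (n + 1)) μ)
    (hν : Integrable (fun x => x ^ (n + 1)) ν)
    (hμB : ∫⁻ x, ENNReal.ofReal (x ^ (2 * n)) ∂μ ≤ ENNReal.ofReal B)
    (hνB : ∫⁻ x, ENNReal.ofReal (x ^ (2 * n)) ∂ν ≤ ENNReal.ofReal B) :
    ENNReal.ofReal (|∫ x, x ^ (n + 1) ∂μ - ∫ x, x ^ (n + 1) ∂ν| / ((n + 1) * √B)) ≤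
      Wp 2 μ ν := by
  refine le_iInf₂ fun γ ⟨hγ₁, hγ₂⟩ => ?_
  subst hγ₁ hγ₂
  have hγμ : Integrable (fun z : ℝ × ℝ => z.1 ^ (n + 1)) γ :=
    (integrable_map_measure (by fun_prop) (by fun_prop)).1 hμ
  have hγν : Integrable (fun z : ℝ × ℝ => z.2 ^ (n + 1)) γ :=
    (integrable_map_measure (by fun_prop) (by fun_prop)).1 hν
  rw [integral_map (by fun_prop) (by fun_prop), integral_map (by fun_prop) (by fun_prop),
    ← integral_sub hγμ hγν]
  rw [lintegral_map (by fun_prop) measurable_fst] at hμB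
  rw [lintegral_map (by fun_prop) measurable_snd] at hνB
  have key := ofReal_abs_integral_pow_succ_sub_le γ n hB hμB hνB
  rcases hB.eq_or_lt with rfl | hB
  · simp
  rw [ENNReal.ofReal_div_of_pos (by positivity)]
  exact ENNReal.div_le_of_le_mul' key

theorem intervalIntegral_mul_comp_le_of_antitoneOn {a b τ R m M : ℝ} {f r φ : ℝ → ℝ}
    (hab : a < b) (hf : ContDiffOn ℝ 1 f (Icc a b)) (hfanti : AntitoneOn f (Icc a b))
    (hτ : 0 < τ) (hf' : ∀ x ∈ Icc a b, τ ≤ |derivWithin f (Icc a b) x|)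
    (hfm : MapsTo f (Icc a b) (Icc m M)) (hr : ContinuousOn r (Icc a b)) (hR : 0 ≤ R)
    (hrR : ∀ x ∈ Icc a b, r x ≤ R) (hφ : Continuous φ) (hφ0 : 0 ≤ φ) :
    ∫ x in a..b, r x * φ (f x) ≤ R / τ * ∫ u in m..M, φ u := by
  set f' := derivWithin f (Icc a b)
  have hf'τ (x : ℝ) (hx : x ∈ Icc a b) : τ ≤ -f' x := by
    have := hf' x hx
    rwa [abs_of_nonpos hfanti.derivWithin_nonpos] at this
  have hf'c : ContinuousOn f' (Icc a b) :=
    hf.continuousOn_derivWithin (uniqueDiffOn_Icc hab) le_rfl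
  have hderiv (x : ℝ) (hx : x ∈ Ioo (min a b) (max a b)) : HasDerivAt f (f' x) x := by
    rw [min_eq_left hab.le, max_eq_right hab.le] at hx
    exact ((hf.differentiableOn one_ne_zero x (Ioo_subset_Icc_self hx)).hasDerivWithinAt).hasDerivAt
      (Icc_mem_nhds hx.1 hx.2)
  have hsubst : ∫ x in a..b, φ (f x) * f' x = ∫ u in f a..f b, φ u :=
    intervalIntegral.integral_comp_mul_deriv_of_deriv_nonpos
      (by rw [uIcc_of_le hab.le]; exact hf.continuousOn) hderiv
      fun _ _ => hfanti.derivWithin_nonpos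
  have hpt (x : ℝ) (hx : x ∈ Icc a b) : r x * φ (f x) ≤ R / τ * (φ (f x) * -f' x) := by
    have hRf' : R ≤ R / τ * -f' x := by
      rw [div_mul_eq_mul_div, le_div_iff₀ hτ]
      exact mul_le_mul_of_nonneg_left (hf'τ x hx) hR
    calc r x * φ (f x) ≤ R * φ (f x) := mul_le_mul_of_nonneg_right (hrR x hx) (hφ0 _)
      _ ≤ R / τ * -f' x * φ (f x) := mul_le_mul_of_nonneg_right hRf' (hφ0 _)
      _ = R / τ * (φ (f x) * -f' x) := by ring
  have ha : a ∈ Icc a b := left_mem_Icc.2 hab.le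
  have hb : b ∈ Icc a b := right_mem_Icc.2 hab.le
  calc ∫ x in a..b, r x * φ (f x) ≤ ∫ x in a..b, R / τ * (φ (f x) * -f' x) := by
        refine intervalIntegral.integral_mono_on hab.le ?_ ?_ hpt <;>
          refine ContinuousOn.intervalIntegrable ?_ <;> rw [uIcc_of_le hab.le]
        · exact hr.mul (hφ.comp_continuousOn hf.continuousOn)
        · exact continuousOn_const.mul ((hφ.comp_continuousOn hf.continuousOn).mul hf'c.neg)
    _ = R / τ * ∫ u in f b..f a, φ u := by
        simp only [intervalIntegral.integral_const_mul, mul_neg, intervalIntegral.integral_neg,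
          hsubst, intervalIntegral.integral_symm (f b), neg_neg]
    _ ≤ R / τ * ∫ u in m..M, φ u := by
        gcongr
        exact intervalIntegral.integral_mono_interval (hfm hb).1 (hfanti ha hb hab.le)
          (hfm ha).2 (Filter.Eventually.of_forall hφ0) (hφ.intervalIntegrable _ _)

theorem integral_withDensity_restrict_Icc {a b : ℝ} {r : ℝ → ℝ} (hab : a ≤ b)
    (hr : AEMeasurable r (volume.restrict (Icc a b))) (hr0 : ∀ x ∈ Icc a b, 0 ≤ r x)
    (φ : ℝ → ℝ) :
    ∫ x, φ x ∂(volume.restrict (Icc a b)).withDensity (fun x => ENNReal.ofReal (r x)) =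
      ∫ x in a..b, r x * φ x := by
  rw [integral_withDensity_eq_integral_toReal_smul₀ hr.ennreal_ofReal
      (ae_of_all _ fun _ => ofReal_lt_top), intervalIntegral.integral_of_le hab,
    ← integral_Icc_eq_integral_Ioc]
  refine setIntegral_congr_fun measurableSet_Icc fun x hx => ?_
  simp [ENNReal.toReal_ofReal (hr0 x hx)]

theorem ae_mem_withDensity_restrict {α : Type*} [MeasurableSpace α] (μ : Measure α) {s : Set α}
    (hs : MeasurableSet s) (d : α → ℝ≥0∞) : ∀ᵐ x ∂(μ.restrict s).withDensity d, x ∈ s :=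
  (withDensity_absolutelyContinuous _ _).ae_le (ae_restrict_mem hs)

theorem ContinuousOn.aemeasurable_of_ae_mem {ρ : Measure ℝ} {s : Set ℝ} {f : ℝ → ℝ}
    (hf : ContinuousOn f s) (hs : MeasurableSet s) (hρ : ∀ᵐ x ∂ρ, x ∈ s) : AEMeasurable f ρ := by
  rw [← Measure.restrict_eq_self_of_ae_mem hρ]
  exact hf.aemeasurable hs

theorem ContinuousOn.integrable_map_of_ae_mem {ρ : Measure ℝ} [IsFiniteMeasure ρ] {s : Set ℝ}
    {f φ : ℝ → ℝ} (hf : ContinuousOn f s) (hs : IsCompact s) (hρ : ∀ᵐ x ∂ρ, x ∈ s)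
    (hφ : Continuous φ) : Integrable φ (ρ.map f) := by
  refine (integrable_map_measure hφ.aestronglyMeasurable
    (hf.aemeasurable_of_ae_mem hs.measurableSet hρ)).2 ?_
  rw [← Measure.restrict_eq_self_of_ae_mem hρ]
  exact (hφ.comp_continuousOn hf).integrableOn_compact hs

theorem lintegral_pow_map_le {a b τ R m M : ℝ} {r f : ℝ → ℝ} {ρ : Measure ℝ} [IsFiniteMeasure ρ]
    (hρ : ρ = (volume.restrict (Icc a b)).withDensity fun x => ENNReal.ofReal (r x))
    (hab : a < b) (hr : ContinuousOn r (Icc a b)) (hr0 : ∀ x ∈ Icc a b, 0 ≤ r x) (hR : 0 ≤ R)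
    (hrR : ∀ x ∈ Icc a b, r x ≤ R) (hf : ContDiffOn ℝ 1 f (Icc a b))
    (hfanti : AntitoneOn f (Icc a b)) (hτ : 0 < τ)
    (hf' : ∀ x ∈ Icc a b, τ ≤ |derivWithin f (Icc a b) x|) (hfm : MapsTo f (Icc a b) (Icc m M))
    (n : ℕ) :
    ∫⁻ x, ENNReal.ofReal (x ^ (2 * n)) ∂ρ.map f ≤
      ENNReal.ofReal (R / τ * ((M ^ (2 * n + 1) - m ^ (2 * n + 1)) / (2 * n + 1))) := by
  have hae : ∀ᵐ x ∂ρ, x ∈ Icc a b := hρ ▸ ae_mem_withDensity_restrict _ measurableSet_Icc _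
  rw [← ofReal_integral_eq_lintegral_ofReal
      (hf.continuousOn.integrable_map_of_ae_mem isCompact_Icc hae (continuous_pow _))
      (ae_of_all _ fun x => (even_two_mul n).pow_nonneg x),
    integral_map (hf.continuousOn.aemeasurable_of_ae_mem measurableSet_Icc hae) (by fun_prop),
    hρ, integral_withDensity_restrict_Icc hab.le (hr.aemeasurable measurableSet_Icc) hr0]
  refine ENNReal.ofReal_le_ofReal ?_
  calc _ ≤ R / τ * ∫ u in m..M, u ^ (2 * n) :=
        intervalIntegral_mul_comp_le_of_antitoneOn hab hf hfanti hτ hf' hfm hr hR hrR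
          (continuous_pow _) fun u => (even_two_mul n).pow_nonneg u
    _ = _ := by rw [integral_pow]; push_cast; ring

theorem mapsTo_Icc_csInf_csSup {α : Type*} {f : α → ℝ} {s : Set α} {t : Set ℝ}
    (ht : IsCompact t) (h : MapsTo f s t) : MapsTo f s (Icc (sInf t) (sSup t)) :=
  fun _ hx => ⟨csInf_le ht.bddBelow (h hx), le_csSup ht.bddAbove (h hx)⟩

/-- Lower bound on `W₂` in terms of moment differences: for `f, g` strictly decreasing
`C¹` functions with derivatives bounded away from `0` by `τ` on a closed bounded
interval `I = [a,b]` carrying the probability measure `dϱ = r dα`,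
`W₂(f_*ϱ, g_*ϱ) ≥ A_k |E_ϱ f^k − E_ϱ g^k|` with
`A_k = (√(2k−1)/k) (M^{2k−1} − m^{2k−1})^{-1/2} τ^{1/2} ‖r‖_∞^{-1/2}`. -/
theorem w2_moment_lower_bound (a b : ℝ) (hab : a < b)
    (r : ℝ → ℝ) (hr : ContinuousOn r (Set.Icc a b)) (hr0 : ∀ x ∈ Set.Icc a b, 0 ≤ r x)
    (ϱ : Measure ℝ)
    (hϱ : ϱ = (volume.restrict (Set.Icc a b)).withDensity (fun α => ENNReal.ofReal (r α)))
    [IsProbabilityMeasure ϱ]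
    (f g : ℝ → ℝ)
    (hf : ContDiffOn ℝ 1 f (Set.Icc a b)) (hg : ContDiffOn ℝ 1 g (Set.Icc a b))
    (hfanti : StrictAntiOn f (Set.Icc a b)) (hganti : StrictAntiOn g (Set.Icc a b))
    (τ : ℝ) (hτ : 0 < τ)
    (hf' : ∀ x ∈ Set.Icc a b, τ ≤ |derivWithin f (Set.Icc a b) x|)
    (hg' : ∀ x ∈ Set.Icc a b, τ ≤ |derivWithin g (Set.Icc a b) x|)
    (k : ℕ) (hk : 1 ≤ k) :
    ENNReal.ofReal
        ((Real.sqrt ((2 * k - 1 : ℕ)) / k /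
            Real.sqrt ((sSup (f '' Set.Icc a b ∪ g '' Set.Icc a b)) ^ (2 * k - 1) -
              (sInf (f '' Set.Icc a b ∪ g '' Set.Icc a b)) ^ (2 * k - 1)) *
          Real.sqrt τ / Real.sqrt (sSup (r '' Set.Icc a b))) *
          |(∫ α, f α ^ k ∂ϱ) - ∫ α, g α ^ k ∂ϱ|) ≤
      Wp 2 (ϱ.map f) (ϱ.map g) := by
  obtain ⟨n, rfl⟩ : ∃ n, k = n + 1 := ⟨k - 1, by omega⟩
  rw [show 2 * (n + 1) - 1 = 2 * n + 1 by omega]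
  set M := sSup (f '' Icc a b ∪ g '' Icc a b)
  set m := sInf (f '' Icc a b ∪ g '' Icc a b)
  set R := sSup (r '' Icc a b)
  have hK : IsCompact (f '' Icc a b ∪ g '' Icc a b) :=
    (isCompact_Icc.image_of_continuousOn hf.continuousOn).union
      (isCompact_Icc.image_of_continuousOn hg.continuousOn)
  have hfm := mapsTo_Icc_csInf_csSup hK ((mapsTo_image f _).mono_right subset_union_left)
  have hgm := mapsTo_Icc_csInf_csSup hK ((mapsTo_image g _).mono_right subset_union_right)
  have hrR (x : ℝ) (hx : x ∈ Icc a b) : r x ≤ R :=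
    (mapsTo_Icc_csInf_csSup (isCompact_Icc.image_of_continuousOn hr) (mapsTo_image r _) hx).2
  have ha : a ∈ Icc a b := left_mem_Icc.2 hab.le
  have hR : 0 ≤ R := (hr0 a ha).trans (hrR a ha)
  set B := R / τ * ((M ^ (2 * n + 1) - m ^ (2 * n + 1)) / (2 * n + 1)) with hB_def
  have hB : 0 ≤ B :=
    mul_nonneg (div_nonneg hR hτ.le) (div_nonneg (sub_nonneg.2
      ((odd_two_mul_add_one n).pow_le_pow.2 ((hfm ha).1.trans (hfm ha).2))) (by positivity))
  have hae : ∀ᵐ x ∂ϱ, x ∈ Icc a b := hϱ ▸ ae_mem_withDensity_restrict _ measurableSet_Icc _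
  calc _ = ENNReal.ofReal
        (|∫ x, x ^ (n + 1) ∂ϱ.map f - ∫ x, x ^ (n + 1) ∂ϱ.map g| / ((n + 1) * √B)) := by
        rw [integral_map (hf.continuousOn.aemeasurable_of_ae_mem measurableSet_Icc hae)
            (by fun_prop),
          integral_map (hg.continuousOn.aemeasurable_of_ae_mem measurableSet_Icc hae)
            (by fun_prop),
          hB_def, Real.sqrt_mul (div_nonneg hR hτ.le), Real.sqrt_div' _ hτ.le,
          Real.sqrt_div' _ (by positivity)]
        push_cast
        congr 1
        simp only [div_eq_mul_inv, mul_inv, inv_inv]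
        ring
    _ ≤ Wp 2 (ϱ.map f) (ϱ.map g) :=
      ofReal_abs_integral_pow_succ_sub_div_le_Wp_two n hB
        (hf.continuousOn.integrable_map_of_ae_mem isCompact_Icc hae (continuous_pow _))
        (hg.continuousOn.integrable_map_of_ae_mem isCompact_Icc hae (continuous_pow _))
        (lintegral_pow_map_le hϱ hab hr hr0 hR hrR hf hfanti.antitoneOn hτ hf' hfm n)
        (lintegral_pow_map_le hϱ hab hr hr0 hR hrR hg hganti.antitoneOn hτ hg' hgm n)
end
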